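/- arXiv:2505.07054 — 3 statements merged into one kernel-verified Lean document; each statement's English description precedes it below -/
import Mathlib

section
/- Let p be a natural number and, for each s ∈ {1,…,p}, let A^{(s)} ∈ ℝ^{q_s×n} and b^{(s)} ∈ ℝ^{q_s} define the polyhedron P_s = {y ∈ ℝⁿ : A^{(s)} y ≤ b^{(s)}}. Then for every x ∈ ℝⁿ and every s ∈ {1,…,p}, the s-th component of the two-layer network output, ReLU( ∑_{i=1}^{q_s} BSF(−(A^{(s)} x)_i + b^{(s)}_i) − q_s + 1 ), equals the indicator function of P_s evaluated at x; hence the network simultaneously computes the vector (𝟙_{P_1}(x), …, 𝟙_{P_p}(x)). -/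
/-- The binary step function: `1` if `t ≥ 0`, `0` otherwise. -/
noncomputable def BSF (t : ℝ) : ℝ := if 0 ≤ t then 1 else 0

/-- The rectified linear unit. -/
def ReLU (t : ℝ) : ℝ := max t 0

theorem network_eq_indicator_polyhedra (n p : ℕ) (q : Fin p → ℕ)
    (A : ∀ s : Fin p, Matrix (Fin (q s)) (Fin n) ℝ)
    (b : ∀ s : Fin p, Fin (q s) → ℝ) :
    ∀ (x : Fin n → ℝ) (s : Fin p),
      ReLU (∑ i, BSF (-((A s).mulVec x i) + b s i) - (q s : ℝ) + 1)
        = Set.indicator {y : Fin n → ℝ | ∀ i, (A s).mulVec y i ≤ b s i}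
            (fun _ => (1 : ℝ)) x := by
  intro x s
  by_cases h : ∀ i, (A s).mulVec x i ≤ b s i
  · rw [Set.indicator_of_mem (show x ∈ {y : Fin n → ℝ | ∀ i, (A s).mulVec y i ≤ b s i} from h)]
    have hsum : ∑ i, BSF (-((A s).mulVec x i) + b s i) = ∑ _i : Fin (q s), (1:ℝ) :=
      Finset.sum_congr rfl (fun i _ => by unfold BSF; rw [if_pos (by linarith [h i])])
    rw [hsum]
    simp [ReLU]
  · rw [Set.indicator_of_notMem (show x ∉ {y : Fin n → ℝ | ∀ i, (A s).mulVec y i ≤ b s i} from h)]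
    push_neg at h
    obtain ⟨j, hj⟩ := h
    have hle : ∀ i, BSF (-((A s).mulVec x i) + b s i) ≤ 1 := by
      intro i; unfold BSF; split <;> norm_num
    have hj0 : BSF (-((A s).mulVec x j) + b s j) = 0 := by
      unfold BSF; rw [if_neg (by linarith)]
    have : ∑ i, BSF (-((A s).mulVec x i) + b s i) ≤ (q s : ℝ) - 1 := by
      calc ∑ i, BSF (-((A s).mulVec x i) + b s i)
          ≤ ∑ i ∈ Finset.univ.erase j, (1:ℝ) := by
            rw [← Finset.add_sum_erase _ _ (Finset.mem_univ j), hj0, zero_add]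
            exact Finset.sum_le_sum (fun i _ => hle i)
        _ = (q s : ℝ) - 1 := by
            rw [Finset.sum_const, Finset.card_erase_of_mem (Finset.mem_univ j)]
            rw [Finset.card_univ, Fintype.card_fin, nsmul_eq_mul, mul_one,
              Nat.cast_sub j.pos, Nat.cast_one]
    simp only [ReLU]
    rw [max_eq_right (by linarith)]
end

section
/- Let p, m, n be natural numbers, and for each k ∈ {1,…,p} let A_k ∈ ℝ^{m×n} and b_k ∈ ℝ^{m}. Let x ∈ ℝⁿ, let M ∈ ℝ satisfy |(A_k x + b_k)_j| ≤ M for all k and all j, and let d : Fin p → ℝ be a vector each of whose entries is 0 or 1 with exactly one index l such that d_l = 1. Then for every j ∈ {1,…,m}: ∑_{k=1}^{p} [ ReLU(M·d_k + (A_k x + b_k)_j − M) − ReLU(M·d_k − (A_k x + b_k)_j − M) ] = (A_l x + b_l)_j. -/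
theorem bigM_gated_sum_selects_active_piece (p m n : ℕ)
    (A : Fin p → Matrix (Fin m) (Fin n) ℝ) (b : Fin p → Fin m → ℝ)
    (x : Fin n → ℝ) (M : ℝ)
    (hM : ∀ (k : Fin p) (j : Fin m), |(A k).mulVec x j + b k j| ≤ M)
    (d : Fin p → ℝ) (hd : ∀ k, d k = 0 ∨ d k = 1)
    (l : Fin p) (hl : d l = 1) (hl' : ∀ k, k ≠ l → d k = 0) :
    ∀ j : Fin m,
      ∑ k, (ReLU (M * d k + ((A k).mulVec x j + b k j) - M)
            - ReLU (M * d k - ((A k).mulVec x j + b k j) - M))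
        = (A l).mulVec x j + b l j := by
  intro j
  rw [Finset.sum_eq_single l]
  · set v := (A l).mulVec x j + b l j with hv
    have h := abs_le.mp (hM l j)
    rw [hl, ReLU, ReLU]
    rcases le_or_gt 0 v with h0 | h0
    · rw [max_eq_left (by linarith), max_eq_right (by linarith)]
      ring
    · rw [max_eq_right (by linarith), max_eq_left (by linarith)]
      ring
  · intro k _ hk
    have h := abs_le.mp (hM k j)
    rw [hl' k hk, ReLU, ReLU, max_eq_right (by linarith), max_eq_right (by linarith)]
    ring
  · intro h; exact absurd (Finset.mem_univ l) h
end

section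
/- Let p, m, n be natural numbers. For each k ∈ {1,…,p}, let the polytope S_k = {y ∈ ℝⁿ : C_k y ≤ c_k} be given by C_k ∈ ℝ^{q_k×n} and c_k ∈ ℝ^{q_k}, and let the affine piece be f_k(y) = A_k y + b_k with A_k ∈ ℝ^{m×n}, b_k ∈ ℝ^{m}. Assume consistency: for all k, j and all y ∈ S_k ∩ S_j, A_k y + b_k = A_j y + b_j (so the piecewise affine function f with f(y) = A_k y + b_k for y ∈ S_k is well defined and continuous on S = ∪_k S_k). Let M ∈ ℝ satisfy |(A_k y + b_k)_j| ≤ M for all k ∈ {1,…,p}, all y ∈ S, and all j ∈ {1,…,m}. For x ∈ ℝⁿ define the layer outputs: δ_k(x) = ReLU( ∑_{i=1}^{q_k} BSF(−(C_k x)_i + (c_k)_i) − q_k + 1 ) for k = 1,…,p; Y_k(x) = ReLU( δ_k(x) − ∑_{l < k} δ_l(x) ) for k = 1,…,p; and for j = 1,…,m, out_j(x) = ∑_{k=1}^{p} [ ReLU(M·Y_k(x) + (A_k x + b_k)_j − M) − ReLU(M·Y_k(x) − (A_k x + b_k)_j − M) ]. Then for every x ∈ S = ∪_{k=1}^{p}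 S_k and every j, out_j(x) = f(x)_j; that is, the five-layer network exactly represents f on its whole domain without any training. -/
/-!
Each layer of the network realises one Boolean operation exactly. On input `x`, the second layer
`δ k` is the indicator of `x ∈ S k` (the `BSF` terms count the satisfied inequalities, and the
`ReLU` fires only when all `q k` of them hold); the third layer `Y k` is the indicator that `k` is
the *least* index with `x ∈ S k`. In the output layer, the pair of `ReLU`s attached to `k` returns
the affine value `f_k(x)` when `Y k x = 1` and vanishes when `Y k x = 0`, because `M` bounds
`|f_k(x)|`. So the output is `f_{k₀}(x)` for the least `k₀` with `x ∈ S k₀`, which agrees with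
every other applicable piece by consistency.
-/

open Finset

lemma ReLU_eq_zero_of_nonpos {t : ℝ} (ht : t ≤ 0) : ReLU t = 0 := max_eq_right ht

lemma ReLU_eq_self_of_nonneg {t : ℝ} (ht : 0 ≤ t) : ReLU t = t := max_eq_left ht

lemma ReLU_sub_ReLU_neg (t : ℝ) : ReLU t - ReLU (-t) = t :=
  max_zero_sub_max_neg_zero_eq_self t

lemma BSF_le_one (t : ℝ) : BSF t ≤ 1 := by
  unfold BSF; split_ifs <;> norm_num

lemma ReLU_sum_BSF_sub_card_add_one {ι : Type*} [Fintype ι] (t : ι → ℝ) :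
    ReLU (∑ i, BSF (t i) - Fintype.card ι + 1) = if ∀ i, 0 ≤ t i then 1 else 0 := by
  classical
  split_ifs with h
  · simp [BSF, h, ReLU]
  · push Not at h
    obtain ⟨i₀, hi₀⟩ := h
    apply ReLU_eq_zero_of_nonpos
    have hsum : ∑ i, BSF (t i) ≤ ∑ i ∈ univ.erase i₀, 1 := by
      rw [← add_sum_erase _ _ (mem_univ i₀), BSF, if_neg hi₀.not_ge, zero_add]
      exact sum_le_sum fun i _ => BSF_le_one (t i)
    have hcard : ((univ.erase i₀).card : ℝ) = Fintype.card ι - 1 := by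
      have hpos : 1 ≤ Fintype.card ι := Fintype.card_pos_iff.2 ⟨i₀⟩
      rw [card_erase_of_mem (mem_univ i₀), card_univ, Nat.cast_sub hpos, Nat.cast_one]
    simp only [sum_const, nsmul_eq_mul, mul_one, hcard] at hsum
    linarith

lemma isLeast_setOf_iff {ι : Type*} [LinearOrder ι] (P : ι → Prop) (k : ι) :
    IsLeast {l | P l} k ↔ P k ∧ ∀ l < k, ¬ P l := by
  refine ⟨fun ⟨hk, h⟩ => ⟨hk, fun l hlk hl => (h hl).not_gt hlk⟩, fun ⟨hk, h⟩ => ⟨hk, ?_⟩⟩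
  exact fun l hl => not_lt.1 fun hlk => h l hlk hl

open Classical in
lemma ReLU_indicator_sub_sum_Iio {ι : Type*} [LinearOrder ι] [LocallyFiniteOrderBot ι]
    (P : ι → Prop) (k : ι) :
    ReLU ((if P k then 1 else 0) - ∑ l ∈ Iio k, if P l then 1 else 0)
      = if IsLeast {l | P l} k then 1 else 0 := by
  have hnonneg : 0 ≤ ∑ l ∈ Iio k, if P l then (1 : ℝ) else 0 :=
    sum_nonneg fun l _ => by split_ifs <;> norm_num
  rw [isLeast_setOf_iff]
  by_cases hk : P k
  · by_cases hfirst : ∀ l < k, ¬ P l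
    · have hzero : ∑ l ∈ Iio k, (if P l then (1 : ℝ) else 0) = 0 :=
        sum_eq_zero fun l hl => if_neg (hfirst l (mem_Iio.1 hl))
      rw [if_pos hk, if_pos ⟨hk, hfirst⟩, hzero, sub_zero]
      exact ReLU_eq_self_of_nonneg zero_le_one
    · push Not at hfirst
      obtain ⟨l, hlk, hl⟩ := hfirst
      have hone : (1 : ℝ) ≤ ∑ l ∈ Iio k, if P l then 1 else 0 := by
        simpa [hl] using single_le_sum (fun l' _ => by split_ifs <;> norm_num)
          (mem_Iio.2 hlk) (f := fun l => if P l then (1 : ℝ) else 0)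
      rw [if_pos hk, if_neg (show ¬(P k ∧ ∀ l < k, ¬P l) from fun h => h.2 l hlk hl)]
      exact ReLU_eq_zero_of_nonpos (by linarith)
  · rw [if_neg hk, if_neg (show ¬(P k ∧ ∀ l < k, ¬P l) from fun h => hk h.1), zero_sub]
    exact ReLU_eq_zero_of_nonpos (by linarith)

lemma sum_ReLU_gates_eq {ι : Type*} [Fintype ι] [DecidableEq ι] (M : ℝ) (g : ι → ℝ)
    (hg : ∀ l, |g l| ≤ M) (k₀ : ι) :
    ∑ l, (ReLU (M * (if l = k₀ then 1 else 0) + g l - M)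
          - ReLU (M * (if l = k₀ then 1 else 0) - g l - M)) = g k₀ := by
  rw [sum_eq_single_of_mem k₀ (mem_univ k₀)]
  · simpa [sub_eq_add_neg] using ReLU_sub_ReLU_neg (g k₀)
  · intro l _ hl
    obtain ⟨hlo, hhi⟩ := abs_le.1 (hg l)
    simp only [if_neg hl, mul_zero, zero_add, zero_sub]
    rw [ReLU_eq_zero_of_nonpos (by linarith), ReLU_eq_zero_of_nonpos (by linarith), sub_zero]

theorem yann_exactly_represents_piecewise_affine (p m n : ℕ)
    (q : Fin p → ℕ)
    (C : ∀ k : Fin p, Matrix (Fin (q k)) (Fin n) ℝ)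
    (c : ∀ k : Fin p, Fin (q k) → ℝ)
    (A : Fin p → Matrix (Fin m) (Fin n) ℝ) (b : Fin p → Fin m → ℝ)
    (S : Fin p → Set (Fin n → ℝ))
    (hS : ∀ k, S k = {y : Fin n → ℝ | ∀ i, (C k).mulVec y i ≤ c k i})
    (hconsist : ∀ (k k' : Fin p), ∀ y ∈ S k ∩ S k',
      (A k).mulVec y + b k = (A k').mulVec y + b k')
    (M : ℝ)
    (hM : ∀ (k : Fin p), ∀ y ∈ ⋃ k' : Fin p, S k', ∀ j : Fin m,
      |(A k).mulVec y j + b k j| ≤ M)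
    (δ : Fin p → (Fin n → ℝ) → ℝ)
    (hδ : ∀ k x, δ k x
      = ReLU (∑ i, BSF (-((C k).mulVec x i) + c k i) - (q k : ℝ) + 1))
    (Y : Fin p → (Fin n → ℝ) → ℝ)
    (hY : ∀ k x, Y k x = ReLU (δ k x - ∑ l ∈ Finset.Iio k, δ l x))
    (out : Fin m → (Fin n → ℝ) → ℝ)
    (hout : ∀ j x, out j x
      = ∑ k, (ReLU (M * Y k x + ((A k).mulVec x j + b k j) - M)
              - ReLU (M * Y k x - ((A k).mulVec x j + b k j) - M))) :
    ∀ x ∈ ⋃ k : Fin p, S k, ∀ (j : Fin m) (k : Fin p), x ∈ S k →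
      out j x = (A k).mulVec x j + b k j := by
  classical
  intro x hx j k hk
  have hδx : ∀ l, δ l x = if x ∈ S l then 1 else 0 := fun l => by
    have h := ReLU_sum_BSF_sub_card_add_one fun i => -((C l).mulVec x i) + c l i
    simp only [Fintype.card_fin, le_neg_add_iff_add_le, add_zero] at h
    rw [hδ, h, hS]
    congr 1
  obtain ⟨k₀, hk₀, hmin⟩ := wellFounded_lt.has_min {l | x ∈ S l} ⟨k, hk⟩
  have hleast : IsLeast {l | x ∈ S l} k₀ := ⟨hk₀, fun l hl => not_lt.1 (hmin l hl)⟩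
  have hYx : ∀ l, Y l x = if l = k₀ then 1 else 0 := fun l => by
    rw [hY, hδx, sum_congr rfl fun l _ => hδx l, ReLU_indicator_sub_sum_Iio (x ∈ S ·) l]
    exact if_congr ⟨fun h => h.unique hleast, fun h => h ▸ hleast⟩ rfl rfl
  simp only [hout, hYx]
  rw [sum_ReLU_gates_eq M _ (fun l => hM l x hx j) k₀]
  exact congrFun (hconsist k₀ k x ⟨hk₀, hk⟩) j
end
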